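/- arXiv:2102.03209 — 4 statements merged into one kernel-verified Lean document; each statement's English description precedes it below -/
import Mathlib

section
/- Let η > 0, s ≥ 1, ω₀ = 1 + η/s², and ω₁ = T_s(ω₀)/T_s'(ω₀). Then ω₁ s² ≤ e^η. -/
/-!
Write `ω₀ = cosh t`. The denominator is `T_s'(ω₀) = s U_{s-1}(ω₀) ≥ s²`, since `U_n(x) ≥ n + 1`
for `x ≥ 1`. The numerator is `T_s(cosh t) = cosh (s t) ≤ exp (s² t² / 2) ≤ exp (s² (cosh t - 1))`,
and `s² (cosh t - 1) = η`.
-/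

open Polynomial Polynomial.Chebyshev

namespace Polynomial.Chebyshev

variable {R : Type*} [CommRing R] [LinearOrder R] [IsStrictOrderedRing R] {x : R}

theorem natCast_add_one_le_eval_U (hx : 1 ≤ x) (n : ℕ) : (n + 1 : R) ≤ (U R n).eval x := by
  suffices ∀ n : ℕ, (n + 1 : R) ≤ (U R n).eval x ∧ (U R n).eval x + 1 ≤ (U R (n + 1 : ℕ)).eval x from
    (this n).1
  intro n
  induction n with
  | zero => norm_num [U_one]; linarith
  | succ n ih =>
    obtain ⟨h_ge, h_step⟩ := ih
    refine ⟨by push_cast at h_step ⊢; linarith, ?_⟩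
    have h_rec : (U R (n + 2 : ℕ)).eval x = 2 * x * (U R (n + 1 : ℕ)).eval x - (U R n).eval x := by
      simp [U_add_two]
    rw [h_rec]
    -- `U_{n+2} - U_{n+1} = (2x - 2) U_{n+1} + (U_{n+1} - U_n)` with `U_{n+1} ≥ 0`
    nlinarith

theorem sq_le_eval_derivative_T (hx : 1 ≤ x) (n : ℕ) :
    (n : R) ^ 2 ≤ (derivative (T R n)).eval x := by
  rcases n with _ | n
  · simp
  have h_index : ((n + 1 : ℕ) : ℤ) - 1 = n := by push_cast; ring
  rw [T_derivative_eq_U, h_index, eval_mul, eval_intCast, Int.cast_natCast, sq]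
  gcongr
  exact_mod_cast natCast_add_one_le_eval_U hx n

end Polynomial.Chebyshev

namespace Real

theorem one_add_sq_div_two_le_cosh (x : ℝ) : 1 + x ^ 2 / 2 ≤ cosh x := by
  have h_sinh : (x / 2) ^ 2 ≤ sinh (x / 2) ^ 2 :=
    sq_le_sq.2 (by rw [abs_sinh]; exact self_le_sinh_iff.2 (abs_nonneg _))
  have h_cosh : cosh x = sinh (x / 2) ^ 2 + 1 + sinh (x / 2) ^ 2 := by
    rw [← cosh_sq, ← cosh_two_mul, mul_div_cancel₀ x two_ne_zero]
  nlinarith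

theorem cosh_mul_le_exp (a t : ℝ) : cosh (a * t) ≤ exp (a ^ 2 * (cosh t - 1)) :=
  calc cosh (a * t) ≤ exp ((a * t) ^ 2 / 2) := cosh_le_exp_half_sq _
    _ = exp (a ^ 2 * (t ^ 2 / 2)) := by ring_nf
    _ ≤ exp (a ^ 2 * (cosh t - 1)) := by
      gcongr
      linarith [one_add_sq_div_two_le_cosh t]

end Real

/-- Let `η > 0`, `s ≥ 1`, `ω₀ = 1 + η/s²`, and `ω₁ = T_s(ω₀)/T_s'(ω₀)`. Then `ω₁ s² ≤ e^η`. -/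
theorem omega_one_bound (η : ℝ) (hη : 0 < η) (s : ℕ) (hs : 1 ≤ s) (ω₀ ω₁ : ℝ)
    (hω₀ : ω₀ = 1 + η / (s : ℝ) ^ 2)
    (hω₁ : ω₁ = (Chebyshev.T ℝ (s : ℤ)).eval ω₀
      / ((Polynomial.derivative (Chebyshev.T ℝ (s : ℤ))).eval ω₀)) :
    ω₁ * (s : ℝ) ^ 2 ≤ Real.exp η := by
  have hs2 : (0 : ℝ) < (s : ℝ) ^ 2 := by positivity
  have h_one_le : 1 ≤ ω₀ := by rw [hω₀]; linarith [div_pos hη hs2]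
  set t := Real.arcosh ω₀
  have h_cosh : Real.cosh t = ω₀ := Real.cosh_arcosh h_one_le
  have h_num : (T ℝ s).eval ω₀ = Real.cosh (s * t) := by
    rw [← h_cosh, T_real_cosh, Int.cast_natCast]
  have h_den := sq_le_eval_derivative_T h_one_le s
  calc ω₁ * (s : ℝ) ^ 2 = Real.cosh (s * t) * ((s : ℝ) ^ 2 / (derivative (T ℝ s)).eval ω₀) := by
        rw [hω₁, h_num]; ring
    _ ≤ Real.cosh (s * t) :=
        mul_le_of_le_one_right (Real.cosh_pos _).le (div_le_one_of_le₀ h_den (hs2.le.trans h_den))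
    _ ≤ Real.exp ((s : ℝ) ^ 2 * (Real.cosh t - 1)) := Real.cosh_mul_le_exp _ _
    _ = Real.exp η := by rw [h_cosh, hω₀, add_sub_cancel_left, mul_div_cancel₀ _ hs2.ne']
end

section
/- Let η > 0, s ≥ 1, ω₀ = 1 + η/s², ω₁ = T_s(ω₀)/T_s'(ω₀), and define A_s(z) = T_s(ω₀ + ω₁ z)/T_s(ω₀) and B_s(z) = (A_s(z) − 1)/z. Then sup_{|z| ≤ 1, z ∈ ℂ, z ≠ 0} |B_s(z)| ≤ 1 + e^{η + e^η}. -/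
/-!
All roots of `T_s` are real and lie in `[-1, 1]`, so for `x ≥ 1` the factorisation
`T_s = 2^(s-1) ∏ (X - r)` gives `|T_s(x + w)| ≤ T_s(x + |w|)`. The same holds for `U_(s-1)`, so
`T_s' = s U_(s-1)` is increasing on `[1, ∞)` and `T_s'(x) ≥ T_s'(1) = s²`.
Writing `x = cosh φ`, `x + h = cosh ψ`, we have `T_s(x) = cosh (s φ)`, and the elementary bounds
`ψ² - φ² ≤ 2 (cosh ψ - cosh φ) = 2h` and `cosh (sψ) ≤ exp ((s²ψ² - s²φ²)/2) cosh (sφ)` give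
`T_s(x + h) ≤ exp (s² h) T_s(x)`. Taking `x = 1` gives `T_s(ω₀) ≤ e^η`, and `s² ω₁ ≤ T_s(ω₀)`
then gives `|A_s| ≤ exp (s² ω₁) ≤ exp (e^η)` on the closed unit disc.
Finally `B_s` is the slope `dslope A_s 0` of the entire function `A_s`, bounded by `|A_s| + 1` on
the unit circle; the maximum modulus principle carries this bound inside.
-/

open Polynomial Polynomial.Chebyshev Real Set

namespace Real

theorem sinh_le_mul_cosh {t : ℝ} (ht : 0 ≤ t) : sinh t ≤ t * cosh t := by
  have hmvt := (convex_Icc 0 t).image_sub_le_mul_sub_of_deriv_le continuous_sinh.continuousOn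
    differentiable_sinh.differentiableOn (C := cosh t)
    (fun u hu => by
      rw [deriv_sinh, cosh_le_cosh, abs_of_nonneg (interior_subset hu).1, abs_of_nonneg ht]
      exact (interior_subset hu).2) 0 (left_mem_Icc.2 ht) t (right_mem_Icc.2 ht) ht
  simpa [mul_comm] using hmvt

theorem sq_sub_sq_le_two_mul_cosh_sub_cosh {x y : ℝ} (hx : 0 ≤ x) (hxy : x ≤ y) :
    y ^ 2 - x ^ 2 ≤ 2 * (cosh y - cosh x) := by
  have hmono : MonotoneOn (fun t => 2 * cosh t - t ^ 2) (Ici 0) := by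
    refine monotoneOn_of_deriv_nonneg (convex_Ici 0) (by fun_prop) (by fun_prop) fun t ht => ?_
    rw [interior_Ici] at ht
    have hderiv : deriv (fun t => 2 * cosh t - t ^ 2) t = 2 * sinh t - 2 * t := by
      simp
    rw [hderiv]
    linarith [self_le_sinh_iff.2 (le_of_lt ht)]
  linarith [hmono hx (hx.trans hxy) hxy]

theorem cosh_le_exp_mul_cosh {x y : ℝ} (hx : 0 ≤ x) (hxy : x ≤ y) :
    cosh y ≤ exp ((y ^ 2 - x ^ 2) / 2) * cosh x := by
  have hanti : AntitoneOn (fun t => exp (-(t ^ 2 / 2)) * cosh t) (Ici 0) := by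
    refine antitoneOn_of_deriv_nonpos (convex_Ici 0) (by fun_prop) (by fun_prop) fun t ht => ?_
    rw [interior_Ici] at ht
    have hderiv : HasDerivAt (fun t => exp (-(t ^ 2 / 2)) * cosh t)
        (exp (-(t ^ 2 / 2)) * -(2 * t ^ 1 / 2) * cosh t + exp (-(t ^ 2 / 2)) * sinh t) t :=
      (((hasDerivAt_pow 2 t).div_const 2).fun_neg.exp).mul (hasDerivAt_cosh t)
    rw [hderiv.deriv, pow_one, mul_div_cancel_left₀ t two_ne_zero]
    nlinarith [exp_pos (-(t ^ 2 / 2)), sinh_le_mul_cosh ht.le]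
  have h := hanti hx (hx.trans hxy) hxy
  calc cosh y = exp (y ^ 2 / 2) * (exp (-(y ^ 2 / 2)) * cosh y) := by
        rw [← mul_assoc, ← exp_add]; simp
    _ ≤ exp (y ^ 2 / 2) * (exp (-(x ^ 2 / 2)) * cosh x) := by gcongr
    _ = exp ((y ^ 2 - x ^ 2) / 2) * cosh x := by rw [← mul_assoc, ← exp_add]; ring_nf

end Real

namespace Polynomial

variable {p : ℝ[X]}

theorem eval_eq_leadingCoeff_mul_prod_roots (hp : Multiset.card p.roots = p.natDegree) (y : ℝ) :
    p.eval y = p.leadingCoeff * (p.roots.map fun r => y - r).prod := by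
  conv_lhs => rw [← C_leadingCoeff_mul_prod_multiset_X_sub_C hp]
  simp [eval_multiset_prod, Multiset.map_map]

theorem eval_map_ofReal_eq_leadingCoeff_mul_prod_roots
    (hp : Multiset.card p.roots = p.natDegree) (z : ℂ) :
    (p.map Complex.ofRealHom).eval z = p.leadingCoeff * (p.roots.map fun r : ℝ => z - r).prod := by
  conv_lhs => rw [← C_leadingCoeff_mul_prod_multiset_X_sub_C hp]
  simp [Polynomial.map_multiset_prod, eval_multiset_prod, Multiset.map_map]

theorem eval_le_eval_of_roots_le (hp : Multiset.card p.roots = p.natDegree)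
    (hlc : 0 ≤ p.leadingCoeff) {x y : ℝ} (hx : ∀ r ∈ p.roots, r ≤ x) (hxy : x ≤ y) :
    p.eval x ≤ p.eval y := by
  rw [eval_eq_leadingCoeff_mul_prod_roots hp, eval_eq_leadingCoeff_mul_prod_roots hp]
  gcongr
  refine Multiset.prod_map_le_prod_map₀ _ _ (fun r hr => sub_nonneg.2 (hx r hr)) fun r _ => ?_
  linarith

theorem norm_eval_map_ofReal_add_le_of_roots_le (hp : Multiset.card p.roots = p.natDegree)
    (hlc : 0 ≤ p.leadingCoeff) {x : ℝ} (hx : ∀ r ∈ p.roots, r ≤ x) (w : ℂ) :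
    ‖(p.map Complex.ofRealHom).eval (x + w)‖ ≤ p.eval (x + ‖w‖) := by
  rw [eval_map_ofReal_eq_leadingCoeff_mul_prod_roots hp, eval_eq_leadingCoeff_mul_prod_roots hp,
    norm_mul, Complex.norm_real, Real.norm_of_nonneg hlc]
  gcongr
  rw [show ∀ s : Multiset ℂ, ‖s.prod‖ = (s.map norm).prod from
    map_multiset_prod (normHom.toMonoidHom : ℂ →* ℝ), Multiset.map_map]
  refine Multiset.prod_map_le_prod_map₀ _ _ (fun r _ => norm_nonneg _) fun r hr => ?_
  calc ‖(x : ℂ) + w - r‖ = ‖((x - r : ℝ) : ℂ) + w‖ := by push_cast; ring_nf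
    _ ≤ ‖((x - r : ℝ) : ℂ)‖ + ‖w‖ := norm_add_le _ _
    _ = x + ‖w‖ - r := by
      rw [Complex.norm_real, Real.norm_of_nonneg (sub_nonneg.2 (hx r hr))]; ring

end Polynomial

namespace Polynomial.Chebyshev

theorem card_roots_T_real (n : ℕ) : Multiset.card (T ℝ n).roots = (T ℝ n).natDegree := by
  rw [roots_T_real, natDegree_T, Int.natAbs_natCast, Finset.card_val,
    Finset.card_image_of_injOn ((Finset.range n).nodup_map_iff_injOn.mp (roots_T_real_nodup n)),
    Finset.card_range]

theorem card_roots_U_real (n : ℕ) : Multiset.card (U ℝ n).roots = (U ℝ n).natDegree := by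
  rw [roots_U_real, natDegree_U_natCast, Finset.card_val,
    Finset.card_image_of_injOn ((Finset.range n).nodup_map_iff_injOn.mp (roots_U_real_nodup n)),
    Finset.card_range]

theorem le_one_of_mem_roots_T_real {n : ℕ} {r : ℝ} (hr : r ∈ (T ℝ n).roots) : r ≤ 1 := by
  rw [roots_T_real, Finset.mem_val, Finset.mem_image] at hr
  obtain ⟨k, -, rfl⟩ := hr
  exact cos_le_one _

theorem le_one_of_mem_roots_U_real {n : ℕ} {r : ℝ} (hr : r ∈ (U ℝ n).roots) : r ≤ 1 := by
  rw [roots_U_real, Finset.mem_val, Finset.mem_image] at hr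
  obtain ⟨k, -, rfl⟩ := hr
  exact cos_le_one _

variable {x : ℝ}

theorem T_eval_le_T_eval (n : ℕ) (hx : 1 ≤ x) {y : ℝ} (hxy : x ≤ y) :
    (T ℝ n).eval x ≤ (T ℝ n).eval y :=
  eval_le_eval_of_roots_le (card_roots_T_real n) (by rw [leadingCoeff_T]; positivity)
    (fun _ hr => (le_one_of_mem_roots_T_real hr).trans hx) hxy

theorem norm_T_eval_add_le (n : ℕ) (hx : 1 ≤ x) (w : ℂ) :
    ‖(T ℂ n).eval (x + w)‖ ≤ (T ℝ n).eval (x + ‖w‖) := by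
  rw [← map_T Complex.ofRealHom]
  exact norm_eval_map_ofReal_add_le_of_roots_le (card_roots_T_real n)
    (by rw [leadingCoeff_T]; positivity) (fun _ hr => (le_one_of_mem_roots_T_real hr).trans hx) w

theorem sq_le_derivative_T_eval (n : ℕ) (hx : 1 ≤ x) :
    (n : ℝ) ^ 2 ≤ (derivative (T ℝ n)).eval x := by
  rcases n with _ | m
  · simp
  have hU : (U ℝ m).eval 1 ≤ (U ℝ m).eval x :=
    eval_le_eval_of_roots_le (card_roots_U_real m) (by rw [leadingCoeff_U_natCast]; positivity)
      (fun _ hr => le_one_of_mem_roots_U_real hr) hx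
  rw [U_eval_one, Int.cast_natCast] at hU
  rw [T_derivative_eq_U]
  simp only [Nat.cast_add, Nat.cast_one, Int.cast_add, Int.cast_natCast, Int.cast_one,
    add_sub_cancel_right, eval_mul, eval_add, eval_natCast, eval_one]
  nlinarith

theorem T_eval_add_le_exp_mul (n : ℕ) (hx : 1 ≤ x) {h : ℝ} (hh : 0 ≤ h) :
    (T ℝ n).eval (x + h) ≤ exp (n ^ 2 * h) * (T ℝ n).eval x := by
  have hφ : cosh (arcosh x) = x := cosh_arcosh hx
  have hψ : cosh (arcosh (x + h)) = x + h := cosh_arcosh (by linarith)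
  have hφψ : arcosh x ≤ arcosh (x + h) :=
    (arcosh_le_arcosh (by linarith) (by linarith)).2 (by linarith)
  have hsq := sq_sub_sq_le_two_mul_cosh_sub_cosh (arcosh_nonneg hx) hφψ
  rw [hφ, hψ] at hsq
  calc (T ℝ n).eval (x + h) = cosh (n * arcosh (x + h)) := by
        simpa [hψ] using T_real_cosh (arcosh (x + h)) n
    _ ≤ exp (((n * arcosh (x + h)) ^ 2 - (n * arcosh x) ^ 2) / 2) * cosh (n * arcosh x) :=
        cosh_le_exp_mul_cosh (by positivity [arcosh_nonneg hx]) (by gcongr)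
    _ ≤ exp (n ^ 2 * h) * cosh (n * arcosh x) := by
        gcongr
        nlinarith [sq_nonneg (n : ℝ)]
    _ = exp (n ^ 2 * h) * (T ℝ n).eval x := by
        simpa [hφ] using (T_real_cosh (arcosh x) n).symm

theorem norm_T_eval_add_le_exp_mul (n : ℕ) (hx : 1 ≤ x) {h : ℝ} {w : ℂ} (hw : ‖w‖ ≤ h) :
    ‖(T ℂ n).eval (x + w)‖ ≤ exp (n ^ 2 * h) * (T ℝ n).eval x :=
  calc ‖(T ℂ n).eval (x + w)‖ ≤ (T ℝ n).eval (x + ‖w‖) := norm_T_eval_add_le n hx w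
    _ ≤ (T ℝ n).eval (x + h) := T_eval_le_T_eval n (by linarith [norm_nonneg w]) (by linarith)
    _ ≤ exp (n ^ 2 * h) * (T ℝ n).eval x := T_eval_add_le_exp_mul n hx ((norm_nonneg w).trans hw)

theorem T_eval_one_add_le_exp_mul (n : ℕ) {h : ℝ} (hh : 0 ≤ h) :
    (T ℝ n).eval (1 + h) ≤ exp (n ^ 2 * h) := by
  simpa using T_eval_add_le_exp_mul n le_rfl hh

theorem norm_T_eval_add_div_derivative_mul_le (n : ℕ) (hx : 1 ≤ x) {w : ℂ} (hw : ‖w‖ ≤ 1) :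
    ‖(T ℂ n).eval (x + ((T ℝ n).eval x / (derivative (T ℝ n)).eval x : ℝ) * w)‖ ≤
      exp ((T ℝ n).eval x) * (T ℝ n).eval x := by
  have hT : 0 ≤ (T ℝ n).eval x := zero_le_one.trans (one_le_eval_T_real n hx)
  have hT' : (n : ℝ) ^ 2 ≤ (derivative (T ℝ n)).eval x := sq_le_derivative_T_eval n hx
  have hT'_nonneg : 0 ≤ (derivative (T ℝ n)).eval x := (sq_nonneg _).trans hT'
  set ω := (T ℝ n).eval x / (derivative (T ℝ n)).eval x
  have hω : 0 ≤ ω := div_nonneg hT hT'_nonneg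
  have hnω : (n : ℝ) ^ 2 * ω ≤ (T ℝ n).eval x :=
    calc (n : ℝ) ^ 2 * ω = (T ℝ n).eval x * ((n : ℝ) ^ 2 / (derivative (T ℝ n)).eval x) := by
          ring
      _ ≤ (T ℝ n).eval x := mul_le_of_le_one_right hT (div_le_one_of_le₀ hT' hT'_nonneg)
  have hωw : ‖(ω : ℂ) * w‖ ≤ ω := by
    rw [norm_mul, Complex.norm_real, Real.norm_of_nonneg hω]
    exact mul_le_of_le_one_right hω hw
  calc _ ≤ exp ((n : ℝ) ^ 2 * ω) * (T ℝ n).eval x := norm_T_eval_add_le_exp_mul n hx hωw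
    _ ≤ exp ((T ℝ n).eval x) * (T ℝ n).eval x := by gcongr

end Polynomial.Chebyshev

theorem Complex.norm_dslope_le_of_forall_mem_sphere_norm_le {f : ℂ → ℂ} (hf : Differentiable ℂ f)
    {c : ℂ} {R M : ℝ} (hR : 0 < R) (hM : ∀ w ∈ Metric.sphere c R, ‖f w‖ ≤ M) {z : ℂ}
    (hz : z ∈ Metric.closedBall c R) : ‖dslope f c z‖ ≤ (M + ‖f c‖) / R := by
  have hd : Differentiable ℂ (dslope f c) := by
    rw [← differentiableOn_univ, differentiableOn_dslope Filter.univ_mem]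
    exact hf.differentiableOn
  refine Complex.norm_le_of_forall_mem_frontier_norm_le Metric.isBounded_ball hd.diffContOnCl
    (fun w hw => ?_) (by rwa [closure_ball c hR.ne'])
  rw [frontier_ball c hR.ne'] at hw
  rw [dslope_of_ne f (Metric.ne_of_mem_sphere hw hR.ne'), slope_def_field, norm_div,
    mem_sphere_iff_norm.1 hw]
  gcongr
  exact (norm_sub_le _ _).trans (by linarith [hM w hw])

/-- Let `η > 0`, `s ≥ 1`, `ω₀ = 1 + η/s²`, `ω₁ = T_s(ω₀)/T_s'(ω₀)`,
`A_s(z) = T_s(ω₀ + ω₁ z)/T_s(ω₀)` and `B_s(z) = (A_s(z) − 1)/z`. Then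
`sup_{|z| ≤ 1, z ≠ 0} |B_s(z)| ≤ 1 + exp (η + exp η)`. -/
theorem B_function_bound_on_disc (η : ℝ) (hη : 0 < η) (s : ℕ) (hs : 1 ≤ s)
    (ω₀ ω₁ : ℝ) (hω₀ : ω₀ = 1 + η / (s : ℝ) ^ 2)
    (hω₁ : ω₁ = (Chebyshev.T ℝ (s : ℤ)).eval ω₀
      / ((Polynomial.derivative (Chebyshev.T ℝ (s : ℤ))).eval ω₀))
    (A B : ℂ → ℂ)
    (hA : ∀ z : ℂ, A z = (Chebyshev.T ℂ (s : ℤ)).eval ((ω₀ : ℂ) + (ω₁ : ℂ) * z)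
      / (Chebyshev.T ℂ (s : ℤ)).eval (ω₀ : ℂ))
    (hB : ∀ z : ℂ, B z = (A z - 1) / z) :
    ∀ z : ℂ, ‖z‖ ≤ 1 → z ≠ 0 →
      ‖B z‖ ≤ 1 + Real.exp (η + Real.exp η) := by
  intro z hz hz0
  have hs₀ : (0 : ℝ) < (s : ℝ) ^ 2 := pow_pos (Nat.cast_pos.2 hs) 2
  have hω₀_ge : 1 ≤ ω₀ := by rw [hω₀]; linarith [div_pos hη hs₀]
  set T₀ := (T ℝ s).eval ω₀
  have hT₀_pos : 0 < T₀ := zero_lt_one.trans_le (one_le_eval_T_real _ hω₀_ge)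
  have hT₀_le : T₀ ≤ exp η := by
    have h := T_eval_one_add_le_exp_mul s (div_pos hη hs₀).le
    rwa [mul_div_cancel₀ _ hs₀.ne', ← hω₀] at h
  have hT₀C : (T ℂ s).eval (ω₀ : ℂ) = T₀ := (complex_ofReal_eval_T ω₀ s).symm
  have hA_bound : ∀ w : ℂ, ‖w‖ ≤ 1 → ‖A w‖ ≤ exp (η + exp η) := by
    intro w hw
    rw [hA, norm_div, hT₀C, Complex.norm_real, Real.norm_of_nonneg hT₀_pos.le,
      div_le_iff₀ hT₀_pos, hω₁]
    refine (norm_T_eval_add_div_derivative_mul_le s hω₀_ge hw).trans ?_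
    gcongr
    linarith
  have hA_diff : Differentiable ℂ A := by
    rw [show A = _ from funext hA]
    fun_prop
  have hA₀ : A 0 = 1 := by
    rw [hA, mul_zero, add_zero, div_self (by rw [hT₀C]; exact_mod_cast hT₀_pos.ne')]
  have hBz : B z = dslope A 0 z := by
    rw [hB, dslope_of_ne _ hz0, slope_def_field, hA₀, sub_zero]
  calc ‖B z‖ = ‖dslope A 0 z‖ := by rw [hBz]
    _ ≤ (exp (η + exp η) + ‖A 0‖) / 1 :=
        Complex.norm_dslope_le_of_forall_mem_sphere_norm_le hA_diff one_pos
          (fun w hw => hA_bound w (by simpa using hw.le)) (by simpa using hz)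
    _ = 1 + exp (η + exp η) := by rw [hA₀, norm_one, div_one, add_comm]
end

section
/- Suppose γ ∈ (0, δ) satisfies γ/8 + C₀ γ e^{γ/2} < 1/2, where C₀ = sup_{s ≥ 1, |z| ≤ δ} |(A_s(z) − e^z)/z²|. Then for every s ≥ 1 and z ∈ [-γ, 0], one has |A_s(z)| ≤ e^{z/2}. -/
open Set

/-!
Write `x = -t` with `0 ≤ t ≤ γ` and `a = e^{-t/2}`. The bound on `(A_s(z) - e^z)/z²` gives
`|A_s(x)| ≤ a² + C₀ t²`, so it suffices that `C₀ t² ≤ a (1 - a)`. The smallness condition,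
monotone in `γ`, gives `C₀ t ≤ (1/2 - t/8) a`, while `1 - a ≥ t/2 - t²/8` by the Taylor bound
`e^{-u} ≤ 1 - u + u²/2` for `u ≥ 0`.
-/

namespace Real

lemma exp_neg_le_one_sub_add_sq_div_two {u : ℝ} (hu : 0 ≤ u) :
    exp (-u) ≤ 1 - u + u ^ 2 / 2 := by
  have hquad : 1 + u + u ^ 2 / 2 ≤ exp u := quadratic_le_exp_of_nonneg hu
  have hinv : exp (-u) * exp u = 1 := by rw [← exp_add, neg_add_cancel, exp_zero]
  -- `(1 + u + u²/2)(1 - u + u²/2) = 1 + u⁴/4 ≥ 1`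
  nlinarith [exp_pos (-u), mul_le_mul_of_nonneg_left hquad (exp_pos (-u)).le, pow_nonneg hu 4]

lemma exp_neg_add_mul_sq_le_exp_neg_half {C γ t : ℝ} (hC : 0 ≤ C) (ht : 0 ≤ t) (htγ : t ≤ γ)
    (hsmall : γ / 8 + C * γ * exp (γ / 2) < 1 / 2) :
    exp (-t) + C * t ^ 2 ≤ exp (-(t / 2)) := by
  set a := exp (-(t / 2)) with ha_def
  have ha : 0 < a := exp_pos _
  have hsq : exp (-t) = a * a := by rw [ha_def, ← exp_add]; ring_nf
  have hcancel : exp (t / 2) * a = 1 := by rw [ha_def, ← exp_add, add_neg_cancel, exp_zero]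
  have hsmall_t : C * t * exp (t / 2) ≤ 1 / 2 - t / 8 := by
    have : C * t * exp (t / 2) ≤ C * γ * exp (γ / 2) := by
      have : 0 ≤ C * γ := mul_nonneg hC (ht.trans htγ)
      gcongr
    linarith
  have hCt : C * t ≤ (1 / 2 - t / 8) * a := by
    calc C * t = C * t * exp (t / 2) * a := by rw [mul_assoc _ (exp _), hcancel, mul_one]
      _ ≤ (1 / 2 - t / 8) * a := by gcongr
  have htaylor : t / 2 - t ^ 2 / 8 ≤ 1 - a := by
    have := exp_neg_le_one_sub_add_sq_div_two (u := t / 2) (by positivity)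
    linarith
  calc exp (-t) + C * t ^ 2 = a * a + t * (C * t) := by rw [hsq]; ring
    _ ≤ a * a + t * ((1 / 2 - t / 8) * a) := by gcongr
    _ = a * a + a * (t / 2 - t ^ 2 / 8) := by ring
    _ ≤ a * a + a * (1 - a) := by gcongr
    _ = a := by ring

end Real

lemma norm_le_exp_re_add_of_norm_sub_exp_div_sq_le {w z : ℂ} {C : ℝ} (hz : z ≠ 0)
    (h : ‖(w - Complex.exp z) / z ^ 2‖ ≤ C) :
    ‖w‖ ≤ Real.exp z.re + C * ‖z‖ ^ 2 := by
  have hdiff : ‖w - Complex.exp z‖ ≤ C * ‖z‖ ^ 2 := by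
    rwa [norm_div, norm_pow, div_le_iff₀ (by positivity)] at h
  calc ‖w‖ = ‖Complex.exp z + (w - Complex.exp z)‖ := by rw [add_sub_cancel]
    _ ≤ ‖Complex.exp z‖ + ‖w - Complex.exp z‖ := norm_add_le _ _
    _ ≤ Real.exp z.re + C * ‖z‖ ^ 2 := by rw [Complex.norm_exp]; gcongr

theorem A_bounded_by_half_exp_general (A : ℕ → ℂ → ℂ) (δ : ℝ)
    (hA0 : ∀ s, 1 ≤ s → A s 0 = 1)
    (C₀ : ℝ)
    (hC₀ : ∀ s, 1 ≤ s → ∀ z : ℂ, z ≠ 0 → ‖z‖ ≤ δ →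
      ‖(A s z - Complex.exp z) / z ^ 2‖ ≤ C₀)
    (γ : ℝ) (hγ : γ ∈ Set.Ioo 0 δ)
    (hsmall : γ / 8 + C₀ * γ * Real.exp (γ / 2) < 1 / 2) :
    ∀ s, 1 ≤ s → ∀ x : ℝ, x ∈ Set.Icc (-γ) 0 →
      ‖A s (x : ℂ)‖ ≤ Real.exp (x / 2) := by
  rintro s hs x ⟨hγx, hx0⟩
  rcases hx0.eq_or_lt with rfl | hneg
  · simp [hA0 s hs]
  have hx : (x : ℂ) ≠ 0 := by exact_mod_cast hneg.ne
  have hnorm : ‖(x : ℂ)‖ = -x := by rw [Complex.norm_real, Real.norm_eq_abs, abs_of_neg hneg]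
  have hC := hC₀ s hs x hx (by rw [hnorm]; linarith [hγ.2])
  have hC₀_nonneg : 0 ≤ C₀ := (norm_nonneg _).trans hC
  calc ‖A s x‖ ≤ Real.exp (-(-x)) + C₀ * (-x) ^ 2 := by
        simpa [hnorm] using norm_le_exp_re_add_of_norm_sub_exp_div_sq_le hx hC
    _ ≤ Real.exp (-(-x / 2)) :=
        Real.exp_neg_add_mul_sq_le_exp_neg_half hC₀_nonneg (by linarith) (by linarith) hsmall
    _ = Real.exp (x / 2) := by ring_nf

/-- Suppose `γ ∈ (0, δ)` satisfies `γ/8 + C₀ γ e^{γ/2} < 1/2`, where `C₀` bounds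
`|(A_s(z) − e^z)/z²|` on the disc of radius `δ`. Then for every `s ≥ 1` and `z ∈ [-γ, 0]`,
`|A_s(z)| ≤ e^{z/2}`. -/
theorem A_bounded_by_half_exp (A : ℕ → ℂ → ℂ) (δ : ℝ) (hδ : 0 < δ)
    (hanal : ∀ s, 1 ≤ s → DifferentiableOn ℂ (A s) (Metric.closedBall (0 : ℂ) δ))
    (hA0 : ∀ s, 1 ≤ s → A s 0 = 1)
    (hA0' : ∀ s, 1 ≤ s → deriv (A s) 0 = 1)
    (C₀ : ℝ)
    (hC₀ : ∀ s, 1 ≤ s → ∀ z : ℂ, z ≠ 0 → ‖z‖ ≤ δ →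
      ‖(A s z - Complex.exp z) / z ^ 2‖ ≤ C₀)
    (γ : ℝ) (hγ : γ ∈ Set.Ioo 0 δ)
    (hsmall : γ / 8 + C₀ * γ * Real.exp (γ / 2) < 1 / 2) :
    ∀ s, 1 ≤ s → ∀ x : ℝ, x ∈ Set.Icc (-γ) 0 →
      ‖A s (x : ℂ)‖ ≤ Real.exp (x / 2) :=
  A_bounded_by_half_exp_general A δ hA0 C₀ hC₀ γ hγ hsmall
end

section
/- Let η ∈ (0, η₀), s ≥ 1, ω₀ = 1 + η/s², ω₁ = T_s(ω₀)/T_s'(ω₀), A_s(z) = T_s(ω₀ + ω₁ z)/T_s(ω₀), and let δ ∈ (0, η e^{-η}). Then for all z ∈ [-δ, 0], (A_s(z) − 1)/z ≥ (1 − A_s(-δ))/δ > 0, and consequently min(1, |z|)/(1 − A_s(z)²) ≤ δ/(1 − A_s(-δ)). -/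
/-!
At `1` every derivative of `T_n` is nonnegative (`(2k - 1)‼ T_n⁽ᵏ⁾(1) = ∏_{l<k} (n² - l²)`), so the
Taylor expansion at `1` shows that every derivative is nonnegative on `[1, ∞)`: `T_n` is increasing
and convex there, with `T_n' ≥ T_n'(1) = n²`. Convexity also gives `T_n(x) - 1 ≤ (x - 1) T_n'(x)`,
hence `ω₁ ≤ (1 + η)/s²`; together with `δ (1 + η) ≤ η e^{-η} e^η = η` this yields
`δ ω₁ ≤ ω₀ - 1`. So `z ↦ ω₀ + ω₁ z` maps `[-δ, 0]` into `[1, ∞)`, and `A_s` is convex on `[-δ, 0]`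
with `A_s(0) = 1 > A_s(-δ)`. The difference-quotient bound is the monotonicity of secant slopes
through `0`, and the last bound follows from `1 - A_s(z)² ≥ 1 - A_s(z) ≥ |z| (1 - A_s(-δ)) / δ`.
-/

open Polynomial Polynomial.Chebyshev Set

/-- `Ω(η) = tanh(√(2η))/√(2η)`. -/
noncomputable def OmegaEta (η : ℝ) : ℝ := Real.tanh (Real.sqrt (2 * η)) / Real.sqrt (2 * η)

/-- `η₀ = inf {η > 0 : η / Ω(η) = 1}`. -/
noncomputable def etaZero : ℝ := sInf {η : ℝ | 0 < η ∧ η / OmegaEta η = 1}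

namespace Polynomial

theorem eval_nonneg_of_iterate_derivative_eval_nonneg {R : Type*} [CommRing R] [LinearOrder R]
    [IsStrictOrderedRing R] {p : R[X]} {r x : R}
    (hp : ∀ k, 0 ≤ (derivative^[k] p).eval r) (hx : r ≤ x) : 0 ≤ p.eval x := by
  have hcoeff (k : ℕ) : 0 ≤ (taylor r p).coeff k := by
    have h : (k.factorial : R) * (taylor r p).coeff k = (derivative^[k] p).eval r := by
      rw [taylor_coeff, ← factorial_smul_hasseDeriv]; simp
    exact (mul_nonneg_iff_of_pos_left (by positivity)).1 (h ▸ hp k)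
  rw [← sub_add_cancel x r, ← taylor_eval, eval_eq_sum]
  exact Finset.sum_nonneg fun k _ => mul_nonneg (hcoeff k) (pow_nonneg (sub_nonneg.2 hx) k)

theorem monotoneOn_eval_of_iterate_derivative_eval_nonneg {p : ℝ[X]} {r : ℝ}
    (hp : ∀ k, 0 ≤ (derivative^[k] p).eval r) : MonotoneOn (fun x ↦ p.eval x) (Ici r) := by
  refine monotoneOn_of_deriv_nonneg (convex_Ici r) p.continuousOn p.differentiableOn fun x hx ↦ ?_
  rw [interior_Ici] at hx
  rw [Polynomial.deriv]
  exact eval_nonneg_of_iterate_derivative_eval_nonneg (fun k ↦ by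
    simpa only [← Function.iterate_succ_apply] using hp (k + 1)) (le_of_lt hx)

namespace Chebyshev

theorem iterate_derivative_T_real_eval_one_nonneg (n : ℤ) (k : ℕ) :
    0 ≤ (derivative^[k] (T ℝ n)).eval 1 := by
  have h := iterate_derivative_T_eval_one (R := ℝ) n k
  push_cast at h
  have hpos : (0 : ℝ) < ∏ l ∈ Finset.range k, (2 * (l : ℝ) + 1) :=
    Finset.prod_pos fun l _ ↦ by positivity
  refine (mul_nonneg_iff_of_pos_left hpos).1 (h ▸ ?_)
  by_cases hk : n.natAbs < k
  · exact (Finset.prod_eq_zero (Finset.mem_range.2 hk) (by simp)).ge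
  · refine Finset.prod_nonneg fun l hl ↦ ?_
    have : (l : ℝ) ≤ |(n : ℝ)| := by
      rw [← Int.cast_abs, ← Int.natCast_natAbs, Int.cast_natCast]
      exact_mod_cast (Finset.mem_range.1 hl).le.trans (not_lt.1 hk)
    nlinarith [sq_abs (n : ℝ), abs_nonneg (n : ℝ)]

theorem monotoneOn_eval_derivative_T_real (n : ℤ) :
    MonotoneOn (fun x ↦ (derivative (T ℝ n)).eval x) (Ici 1) :=
  monotoneOn_eval_of_iterate_derivative_eval_nonneg fun k ↦ by
    simpa only [← Function.iterate_succ_apply] using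
      iterate_derivative_T_real_eval_one_nonneg n (k + 1)

theorem sq_le_eval_derivative_T_real (n : ℤ) {x : ℝ} (hx : 1 ≤ x) :
    (n : ℝ) ^ 2 ≤ (derivative (T ℝ n)).eval x := by
  simpa [derivative_T_eval_one] using
    monotoneOn_eval_derivative_T_real n self_mem_Ici (mem_Ici.2 hx) hx

theorem strictMonoOn_eval_T_real {n : ℤ} (hn : n ≠ 0) :
    StrictMonoOn (fun x ↦ (T ℝ n).eval x) (Ici 1) := by
  refine strictMonoOn_of_deriv_pos (convex_Ici 1) (T ℝ n).continuousOn fun x hx ↦ ?_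
  rw [interior_Ici] at hx
  rw [Polynomial.deriv]
  have : (0 : ℝ) < (n : ℝ) ^ 2 := by positivity
  exact this.trans_le (sq_le_eval_derivative_T_real n (le_of_lt hx))

theorem convexOn_eval_T_real (n : ℤ) : ConvexOn ℝ (Ici 1) (fun x ↦ (T ℝ n).eval x) := by
  refine MonotoneOn.convexOn_of_deriv (convex_Ici 1) (T ℝ n).continuousOn
    (T ℝ n).differentiableOn ?_
  have hderiv : deriv (fun x ↦ (T ℝ n).eval x) = fun x ↦ (derivative (T ℝ n)).eval x :=
    _root_.funext fun _ ↦ Polynomial.deriv _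
  exact hderiv ▸ (monotoneOn_eval_derivative_T_real n).mono interior_subset

theorem eval_T_div_eval_derivative_T_real_le {n : ℤ} (hn : n ≠ 0) {x : ℝ} (hx : 1 ≤ x) :
    (T ℝ n).eval x / (derivative (T ℝ n)).eval x ≤ x - 1 + 1 / (n : ℝ) ^ 2 := by
  have hn2 : (0 : ℝ) < (n : ℝ) ^ 2 := by positivity
  have hT' := sq_le_eval_derivative_T_real n hx
  have hslope : (T ℝ n).eval x - 1 ≤ (x - 1) * (derivative (T ℝ n)).eval x := by
    rcases hx.eq_or_lt with rfl | hx
    · simp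
    have := (convexOn_eval_T_real n).slope_le_deriv self_mem_Ici (mem_Ici.2 hx.le) hx
      (T ℝ n).differentiableAt
    rw [Polynomial.deriv, slope_def_field, T_eval_one, div_le_iff₀ (sub_pos.2 hx)] at this
    linarith
  rw [div_le_iff₀ (hn2.trans_le hT'), add_mul, one_div_mul_eq_div]
  linarith [(one_le_div hn2).2 hT']

theorem eval_T_div_eval_derivative_T_real_mul_le {n : ℤ} (hn : n ≠ 0) {η δ : ℝ} (hη : 0 ≤ η)
    (hδ : 0 ≤ δ) (hδη : δ ≤ η * Real.exp (-η)) :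
    (T ℝ n).eval (1 + η / (n : ℝ) ^ 2) / (derivative (T ℝ n)).eval (1 + η / (n : ℝ) ^ 2) * δ
      ≤ η / (n : ℝ) ^ 2 := by
  have hn2 : (0 : ℝ) < (n : ℝ) ^ 2 := by positivity
  have hratio := eval_T_div_eval_derivative_T_real_le hn
    (le_add_of_nonneg_right (div_nonneg hη hn2.le) : 1 ≤ 1 + η / (n : ℝ) ^ 2)
  rw [add_sub_cancel_left, ← add_div] at hratio
  have hδη' : δ * (η + 1) ≤ η := calc
    δ * (η + 1) ≤ η * Real.exp (-η) * Real.exp η :=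
      mul_le_mul hδη (by linarith [Real.add_one_le_exp η]) (by positivity) (by positivity)
    _ = η := by rw [mul_assoc, ← Real.exp_add, neg_add_cancel, Real.exp_zero, mul_one]
  calc _ ≤ (η + 1) / (n : ℝ) ^ 2 * δ := mul_le_mul_of_nonneg_right hratio hδ
    _ ≤ η / (n : ℝ) ^ 2 := by rw [div_mul_eq_mul_div, mul_comm]; gcongr

end Chebyshev

end Polynomial

theorem ConvexOn.comp_add_mul {s : Set ℝ} {g : ℝ → ℝ} (hg : ConvexOn ℝ s g) (a b : ℝ) :
    ConvexOn ℝ ((fun z ↦ a + b * z) ⁻¹' s) (fun z ↦ g (a + b * z)) :=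
  hg.comp_affineMap (AffineMap.const ℝ ℝ a + b • AffineMap.id ℝ ℝ)

section NormalizedConvex

variable {f : ℝ → ℝ} {δ : ℝ}

theorem ConvexOn.one_sub_div_le_sub_one_div (hf : ConvexOn ℝ (Icc (-δ) 0) f) (hf0 : f 0 = 1)
    (hδ : 0 < δ) {z : ℝ} (hz : z ∈ Icc (-δ) 0) (hz0 : z ≠ 0) :
    (1 - f (-δ)) / δ ≤ (f z - 1) / z := by
  have h := hf.secant_mono (right_mem_Icc.2 (by linarith)) (left_mem_Icc.2 (by linarith)) hz
    (by linarith) hz0 hz.1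
  rwa [hf0, sub_zero, sub_zero, ← neg_div_neg_eq, neg_sub, neg_neg] at h

theorem ConvexOn.min_one_abs_div_one_sub_sq_le (hf : ConvexOn ℝ (Icc (-δ) 0) f) (hf0 : f 0 = 1)
    (hδ : 0 < δ) (hfδ : f (-δ) < 1) (hf_nonneg : ∀ z ∈ Icc (-δ) 0, 0 ≤ f z) {z : ℝ}
    (hz : z ∈ Icc (-δ) 0) : min 1 |z| / (1 - f z ^ 2) ≤ δ / (1 - f (-δ)) := by
  rcases hz.2.eq_or_lt with rfl | hz0
  · simp [hf0, div_nonneg hδ.le (sub_nonneg.2 hfδ.le)]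
  have hslope := hf.one_sub_div_le_sub_one_div hf0 hδ hz hz0.ne
  rw [le_div_iff_of_neg hz0, div_mul_eq_mul_div, le_div_iff₀ hδ] at hslope
  have hfz : f z < 1 := by nlinarith
  calc min 1 |z| / (1 - f z ^ 2) ≤ -z / (1 - f z) :=
        div_le_div₀ (by linarith) ((min_le_right _ _).trans_eq (abs_of_neg hz0))
          (sub_pos.2 hfz) (by nlinarith [hf_nonneg z hz])
    _ ≤ δ / (1 - f (-δ)) := by
        rw [div_le_div_iff₀ (sub_pos.2 hfz) (sub_pos.2 hfδ)]
        linarith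

end NormalizedConvex

theorem lower_bound_difference_quotient_general (η : ℝ)
    (s : ℕ) (hs : 1 ≤ s)
    (ω₀ ω₁ : ℝ) (hω₀ : ω₀ = 1 + η / (s : ℝ) ^ 2)
    (hω₁ : ω₁ = (Chebyshev.T ℝ (s : ℤ)).eval ω₀
      / ((Polynomial.derivative (Chebyshev.T ℝ (s : ℤ))).eval ω₀))
    (A : ℝ → ℝ)
    (hA : ∀ z : ℝ, A z = (Chebyshev.T ℝ (s : ℤ)).eval (ω₀ + ω₁ * z)
      / (Chebyshev.T ℝ (s : ℤ)).eval ω₀)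
    (δ : ℝ) (hδ : δ ∈ Set.Ioo 0 (η * Real.exp (-η))) :
    (∀ z ∈ Set.Icc (-δ) 0, z ≠ 0 → (1 - A (-δ)) / δ ≤ (A z - 1) / z) ∧
      0 < (1 - A (-δ)) / δ ∧
      ∀ z ∈ Set.Icc (-δ) 0, min 1 |z| / (1 - (A z) ^ 2) ≤ δ / (1 - A (-δ)) := by
  obtain ⟨hδ0, hδη⟩ := hδ
  have hη : 0 < η := pos_of_mul_pos_left (hδ0.trans hδη) (Real.exp_pos _).le
  have hs0 : (s : ℤ) ≠ 0 := by omega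
  have hs2 : (0 : ℝ) < (s : ℝ) ^ 2 := by positivity
  have hω₀1 : 1 ≤ ω₀ := by rw [hω₀]; linarith [div_pos hη hs2]
  have hTω₀ : 0 < (T ℝ s).eval ω₀ := one_pos.trans_le (one_le_eval_T_real _ hω₀1)
  have hω₁0 : 0 < ω₁ := by
    have := sq_le_eval_derivative_T_real s hω₀1
    push_cast at this
    exact hω₁ ▸ div_pos hTω₀ (hs2.trans_le this)
  have hω₁δ : ω₁ * δ ≤ ω₀ - 1 := by
    have := eval_T_div_eval_derivative_T_real_mul_le hs0 hη.le hδ0.le hδη.le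
    push_cast at this
    rwa [hω₁, hω₀, add_sub_cancel_left]
  have hdom : Icc (-δ) 0 ⊆ (fun z ↦ ω₀ + ω₁ * z) ⁻¹' Ici 1 := fun z hz ↦ by
    simp only [mem_preimage, mem_Ici]; nlinarith [hz.1]
  have hconv : ConvexOn ℝ (Icc (-δ) 0) A :=
    ((((convexOn_eval_T_real s).comp_add_mul ω₀ ω₁).subset hdom (convex_Icc _ _)).smul
      (inv_nonneg.2 hTω₀.le)).congr fun z _ ↦ by simp [hA, div_eq_inv_mul]
  have hA0 : A 0 = 1 := by rw [hA, mul_zero, add_zero, div_self hTω₀.ne']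
  have hAδ : A (-δ) < 1 := by
    rw [hA, div_lt_one hTω₀]
    exact strictMonoOn_eval_T_real hs0 (hdom (left_mem_Icc.2 (by linarith))) hω₀1
      (by nlinarith)
  have hA_nonneg (z : ℝ) (hz : z ∈ Icc (-δ) 0) : 0 ≤ A z := by
    rw [hA]; exact div_nonneg (zero_le_one.trans (one_le_eval_T_real _ (hdom hz))) hTω₀.le
  exact ⟨fun z hz hz0 ↦ hconv.one_sub_div_le_sub_one_div hA0 hδ0 hz hz0,
    div_pos (sub_pos.2 hAδ) hδ0,
    fun z hz ↦ hconv.min_one_abs_div_one_sub_sq_le hA0 hδ0 hAδ hA_nonneg hz⟩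

/-- Let `η ∈ (0, η₀)`, `s ≥ 1`, `ω₀ = 1 + η/s²`, `ω₁ = T_s(ω₀)/T_s'(ω₀)`,
`A_s(z) = T_s(ω₀ + ω₁ z)/T_s(ω₀)`, and `δ ∈ (0, η e^{-η})`. Then for all `z ∈ [-δ, 0]`,
`(A_s(z) − 1)/z ≥ (1 − A_s(-δ))/δ > 0`, and consequently
`min(1, |z|)/(1 − A_s(z)²) ≤ δ/(1 − A_s(-δ))`. -/
theorem lower_bound_difference_quotient (η : ℝ) (hη : η ∈ Set.Ioo 0 etaZero)
    (s : ℕ) (hs : 1 ≤ s)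
    (ω₀ ω₁ : ℝ) (hω₀ : ω₀ = 1 + η / (s : ℝ) ^ 2)
    (hω₁ : ω₁ = (Chebyshev.T ℝ (s : ℤ)).eval ω₀
      / ((Polynomial.derivative (Chebyshev.T ℝ (s : ℤ))).eval ω₀))
    (A : ℝ → ℝ)
    (hA : ∀ z : ℝ, A z = (Chebyshev.T ℝ (s : ℤ)).eval (ω₀ + ω₁ * z)
      / (Chebyshev.T ℝ (s : ℤ)).eval ω₀)
    (δ : ℝ) (hδ : δ ∈ Set.Ioo 0 (η * Real.exp (-η))) :
    (∀ z ∈ Set.Icc (-δ) 0, z ≠ 0 → (1 - A (-δ)) / δ ≤ (A z - 1) / z) ∧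
      0 < (1 - A (-δ)) / δ ∧
      ∀ z ∈ Set.Icc (-δ) 0, min 1 |z| / (1 - (A z) ^ 2) ≤ δ / (1 - A (-δ)) :=
  lower_bound_difference_quotient_general η s hs ω₀ ω₁ hω₀ hω₁ A hA δ hδ
end
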